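/- Let A : ℝ^n → ℝ^{N×m}, b : ℝ^n → ℝ^N be (L_A, L_b)-Lipschitz in ℓ∞ norms on D, U bounded by M in ℓ∞ norm, and c(x) = sup_{u∈U} min_i (A(x)u + b(x))_i. Suppose there exists x̄ ∈ D and η′ = λ^{-1} r̲ (L_A M + L_b)/2 for some 0 < λ < 1, r̲ > 0, such that c(x) ≥ η′ for all x ∈ D. Then for every x̄ ∈ D, every point x′ ∈ D with ‖x′ − x̄‖_∞ ≤ λ^{-1} r̲ / 2 satisfies: there exists u ∈ U with A(x′)u + b(x′) ≥ 0 componentwise. -/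

import Mathlib

/-!
Fix `x ∈ D` and an input `u ∈ U` with `A x u + b x ≥ η'` componentwise. Moving from `x` to `x'`
changes each component of `A · u + b ·` by at most `‖A x' - A x‖ ‖u‖ + ‖b x' - b x‖
≤ (L_A M + L_b) ‖x' - x‖∞`, which is at most `η'` as soon as `‖x' - x‖∞ ≤ λ⁻¹ r̲ / 2`;
so the same `u` stays feasible at `x'`.
-/

noncomputable def vecNormInf {N : ℕ} (v : Fin N → ℝ) : ℝ := ⨆ i, |v i|

/-- `ℓ∞ → ℓ∞` induced operator norm of a matrix (max absolute row sum). -/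
noncomputable def matNormInf {N m : ℕ} (A : Matrix (Fin N) (Fin m) ℝ) : ℝ := ⨆ i, ∑ j, |A i j|

lemma abs_le_vecNormInf {N : ℕ} (v : Fin N → ℝ) (i : Fin N) : |v i| ≤ vecNormInf v :=
  le_ciSup (f := fun i => |v i|) (Set.finite_range _).bddAbove i

lemma vecNormInf_nonneg {N : ℕ} (v : Fin N → ℝ) : 0 ≤ vecNormInf v :=
  Real.iSup_nonneg fun _ => abs_nonneg _

lemma rowSum_abs_le_matNormInf {N m : ℕ} (A : Matrix (Fin N) (Fin m) ℝ) (i : Fin N) :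
    ∑ j, |A i j| ≤ matNormInf A :=
  le_ciSup (f := fun i => ∑ j, |A i j|) (Set.finite_range _).bddAbove i

lemma matNormInf_nonneg {N m : ℕ} (A : Matrix (Fin N) (Fin m) ℝ) : 0 ≤ matNormInf A :=
  Real.iSup_nonneg fun _ => Finset.sum_nonneg fun _ _ => abs_nonneg _

lemma abs_mulVec_le {N m : ℕ} (A : Matrix (Fin N) (Fin m) ℝ) (v : Fin m → ℝ) (i : Fin N) :
    |A.mulVec v i| ≤ matNormInf A * vecNormInf v :=
  calc |A.mulVec v i| = |∑ j, A i j * v j| := rfl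
    _ ≤ ∑ j, |A i j| * |v j| := by
        simpa only [abs_mul] using Finset.abs_sum_le_sum_abs (fun j => A i j * v j) Finset.univ
    _ ≤ ∑ j, |A i j| * vecNormInf v :=
        Finset.sum_le_sum fun j _ => by gcongr; exact abs_le_vecNormInf v j
    _ = (∑ j, |A i j|) * vecNormInf v := (Finset.sum_mul ..).symm
    _ ≤ matNormInf A * vecNormInf v :=
        mul_le_mul_of_nonneg_right (rowSum_abs_le_matNormInf A i) (vecNormInf_nonneg v)

lemma abs_affine_sub_le {N m : ℕ} (A A' : Matrix (Fin N) (Fin m) ℝ) (b b' : Fin N → ℝ)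
    (u : Fin m → ℝ) (i : Fin N) :
    |(A'.mulVec u i + b' i) - (A.mulVec u i + b i)| ≤
      matNormInf (A' - A) * vecNormInf u + vecNormInf (b' - b) := by
  have hsplit : (A'.mulVec u i + b' i) - (A.mulVec u i + b i) =
      (A' - A).mulVec u i + (b' - b) i := by
    rw [Matrix.sub_mulVec, Pi.sub_apply, Pi.sub_apply]
    ring
  rw [hsplit]
  exact (abs_add_le _ _).trans (add_le_add (abs_mulVec_le _ _ _) (abs_le_vecNormInf _ _))

lemma abs_affine_sub_le_of_lipschitz {n N m : ℕ} {D : Set (Fin n → ℝ)}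
    {A : (Fin n → ℝ) → Matrix (Fin N) (Fin m) ℝ} {b : (Fin n → ℝ) → (Fin N → ℝ)} {LA Lb M : ℝ}
    (hA : ∀ x ∈ D, ∀ x' ∈ D, matNormInf (A x - A x') ≤ LA * vecNormInf (x - x'))
    (hb : ∀ x ∈ D, ∀ x' ∈ D, vecNormInf (b x - b x') ≤ Lb * vecNormInf (x - x'))
    {x x' : Fin n → ℝ} (hx : x ∈ D) (hx' : x' ∈ D) {u : Fin m → ℝ} (hu : vecNormInf u ≤ M)
    (i : Fin N) :
    |((A x').mulVec u i + b x' i) - ((A x).mulVec u i + b x i)| ≤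
      (LA * M + Lb) * vecNormInf (x' - x) := by
  have hAu : matNormInf (A x' - A x) * vecNormInf u ≤ LA * vecNormInf (x' - x) * M := by
    have hA' := hA x' hx' x hx
    exact mul_le_mul hA' hu (vecNormInf_nonneg u) ((matNormInf_nonneg _).trans hA')
  calc _ ≤ matNormInf (A x' - A x) * vecNormInf u + vecNormInf (b x' - b x) :=
        abs_affine_sub_le _ _ _ _ _ _
    _ ≤ LA * vecNormInf (x' - x) * M + Lb * vecNormInf (x' - x) :=
        add_le_add hAu (hb x' hx' x hx)
    _ = (LA * M + Lb) * vecNormInf (x' - x) := by ring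

theorem robust_level_checks_cube_general {n N m : ℕ}
    (D : Set (Fin n → ℝ))
    (A : (Fin n → ℝ) → Matrix (Fin N) (Fin m) ℝ)
    (b : (Fin n → ℝ) → (Fin N → ℝ))
    (LA Lb M : ℝ)
    (hA : ∀ x ∈ D, ∀ x' ∈ D, matNormInf (A x - A x') ≤ LA * vecNormInf (x - x'))
    (hb : ∀ x ∈ D, ∀ x' ∈ D, vecNormInf (b x - b x') ≤ Lb * vecNormInf (x - x'))
    (U : Set (Fin m → ℝ)) (hU : ∀ u ∈ U, vecNormInf u ≤ M)
    (hpos : 0 < LA * M + Lb)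
    (lam rbar : ℝ)
    (hrobust : ∀ x ∈ D, ∃ u ∈ U,
      ∀ i, lam⁻¹ * rbar * (LA * M + Lb) / 2 ≤ (A x).mulVec u i + b x i) :
    ∀ x ∈ D, ∀ x' ∈ D, vecNormInf (x' - x) ≤ lam⁻¹ * rbar / 2 →
      ∃ u ∈ U, ∀ i, 0 ≤ (A x').mulVec u i + b x' i := by
  intro x hx x' hx' hdist
  obtain ⟨u, hu, hlevel⟩ := hrobust x hx
  refine ⟨u, hu, fun i => ?_⟩
  have hshift := abs_le.mp (abs_affine_sub_le_of_lipschitz hA hb hx hx' (hU u hu) i)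
  have hradius : (LA * M + Lb) * vecNormInf (x' - x) ≤ lam⁻¹ * rbar * (LA * M + Lb) / 2 :=
    calc (LA * M + Lb) * vecNormInf (x' - x) ≤ (LA * M + Lb) * (lam⁻¹ * rbar / 2) := by
          gcongr
      _ = lam⁻¹ * rbar * (LA * M + Lb) / 2 := by ring
  linarith [hlevel i, hshift.1]

/-- robust compatibility with level `η' = λ⁻¹ r̲ (L_A M + L_b)/2` guarantees
that every point of `D` within `ℓ∞` distance `λ⁻¹ r̲ / 2` of a point of `D` admits a
feasible input. -/
theorem robust_level_checks_cube {n N m : ℕ}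
    (D : Set (Fin n → ℝ))
    (A : (Fin n → ℝ) → Matrix (Fin N) (Fin m) ℝ)
    (b : (Fin n → ℝ) → (Fin N → ℝ))
    (LA Lb M : ℝ)
    (hA : ∀ x ∈ D, ∀ x' ∈ D, matNormInf (A x - A x') ≤ LA * vecNormInf (x - x'))
    (hb : ∀ x ∈ D, ∀ x' ∈ D, vecNormInf (b x - b x') ≤ Lb * vecNormInf (x - x'))
    (U : Set (Fin m → ℝ)) (hU : ∀ u ∈ U, vecNormInf u ≤ M)
    (hpos : 0 < LA * M + Lb)
    (lam rbar : ℝ) (hlam₀ : 0 < lam) (hlam₁ : lam < 1) (hrbar : 0 < rbar)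
    (hrobust : ∀ x ∈ D, ∃ u ∈ U,
      ∀ i, lam⁻¹ * rbar * (LA * M + Lb) / 2 ≤ (A x).mulVec u i + b x i) :
    ∀ x ∈ D, ∀ x' ∈ D, vecNormInf (x' - x) ≤ lam⁻¹ * rbar / 2 →
      ∃ u ∈ U, ∀ i, 0 ≤ (A x').mulVec u i + b x' i :=
  robust_level_checks_cube_general D A b LA Lb M hA hb U hU hpos lam rbar hrobust
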